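/- Let d = 2, let 0 < r < 1 and α > 0, let g := χ_{B_r(0)} be the characteristic function of the open Euclidean ball of radius r centered at the origin in ℝ², let u := max(0, 1 − 2/(α·r))·χ_{B_r(0)}, and let z : ℝ² → ℝ² be defined by z(x) := −(r/max(r, ‖x‖)²)·min(1, α·r/2)·x. Then ‖z(x)‖ ≤ 1 for every x ∈ ℝ², and for every x ∈ ℝ² with ‖x‖ ≠ r and x ≠ 0, the map z is Fréchet differentiable at x and the trace of its derivative (i.e. the divergence of z at x) equals α·(u(x) − g(x)). -/

import Mathlib

open Classical

/-- The noisy image `g = χ_{B_r(0)}` (characteristic function of the open ball). -/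
noncomputable def roiG (r : ℝ) (x : EuclideanSpace ℝ (Fin 2)) : ℝ :=
  if ‖x‖ < r then 1 else 0

/-- The exact primal solution `u = max(0, 1 − 2/(α r)) χ_{B_r(0)}`. -/
noncomputable def roiU (r α : ℝ) (x : EuclideanSpace ℝ (Fin 2)) : ℝ :=
  max 0 (1 - 2 / (α * r)) * roiG r x

/-- The exact dual solution `z(x) = −(r / max(r,‖x‖)²) min(1, α r / 2) x`. -/
noncomputable def roiZ (r α : ℝ) (x : EuclideanSpace ℝ (Fin 2)) :
    EuclideanSpace ℝ (Fin 2) :=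
  (-(r / (max r ‖x‖) ^ 2 * min 1 (α * r / 2))) • x

/-!
Inside the disc, `z` is the linear field `-(m / r) x` with `m = min 1 (α r / 2)`; its divergence
`-2 m / r = -min (2 / r) α` is exactly `α (u - g)` there. Outside the disc, `z` is a multiple of
`x / ‖x‖²`, whose divergence in dimension `n` is `(n - 2) / ‖x‖²`, hence zero in the plane, matching
`u = g = 0`. The bound follows from `‖z x‖ = r m ‖x‖ / max r ‖x‖ ^ 2 ≤ r / max r ‖x‖ ≤ 1`.
-/

open Filter Topology

section Divergence

variable {E : Type*} [NormedAddCommGroup E] [InnerProductSpace ℝ E]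

def HasDivAt (f : E → E) (d : ℝ) (x : E) : Prop :=
  ∃ L : E →L[ℝ] E, HasFDerivAt f L x ∧ LinearMap.trace ℝ E L.toLinearMap = d

theorem HasDivAt.congr_of_eventuallyEq {f g : E → E} {d : ℝ} {x : E} (h : HasDivAt f d x)
    (hfg : g =ᶠ[𝓝 x] f) : HasDivAt g d x :=
  let ⟨L, hL, htr⟩ := h
  ⟨L, hL.congr_of_eventuallyEq hfg, htr⟩

theorem HasDivAt.const_smul {f : E → E} {d : ℝ} {x : E} (h : HasDivAt f d x) (c : ℝ) :
    HasDivAt (fun y ↦ c • f y) (c * d) x :=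
  let ⟨L, hL, htr⟩ := h
  ⟨c • L, hL.const_smul c, by simp [htr]⟩

variable [FiniteDimensional ℝ E]

theorem hasDivAt_id (x : E) : HasDivAt id (Module.finrank ℝ E) x :=
  ⟨ContinuousLinearMap.id ℝ E, hasFDerivAt_id x, LinearMap.trace_id ℝ E⟩

theorem hasDivAt_inv_norm_sq_smul {x : E} (hx : x ≠ 0) :
    HasDivAt (fun y ↦ (‖y‖ ^ 2)⁻¹ • y) ((Module.finrank ℝ E - 2) / ‖x‖ ^ 2) x := by
  have hx2 : ‖x‖ ^ 2 ≠ 0 := by positivity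
  have hinv := (hasFDerivAt_inv hx2).comp x ((hasStrictFDerivAt_norm_sq x).hasFDerivAt)
  refine ⟨_, hinv.smul (hasFDerivAt_id x), ?_⟩
  simp only [Function.comp_apply, ContinuousLinearMap.toLinearMap_add,
    ContinuousLinearMap.toLinearMap_smul, ContinuousLinearMap.coe_id,
    ContinuousLinearMap.coe_smulRight, ContinuousLinearMap.toLinearMap_comp,
    ContinuousLinearMap.toLinearMap_toSpanSingleton, ContinuousLinearMap.toLinearMap_innerSL_apply,
    map_add, map_smul, LinearMap.trace_id, LinearMap.trace_smulRight, LinearMap.smul_apply,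
    LinearMap.coe_comp, coe_innerₛₗ_apply, real_inner_self_eq_norm_sq,
    LinearMap.toSpanSingleton_apply, smul_eq_mul, nsmul_eq_mul]
  field_simp
  ring

end Divergence

section Benchmark

variable {r α : ℝ}

theorem roiZ_of_norm_le {x : EuclideanSpace ℝ (Fin 2)} (hx : ‖x‖ ≤ r) :
    roiZ r α x = -(min 1 (α * r / 2) / r) • x := by
  rw [roiZ, max_eq_left hx]
  congr 1
  rcases eq_or_ne r 0 with rfl | hr
  · simp
  · field_simp

theorem roiZ_of_le_norm {x : EuclideanSpace ℝ (Fin 2)} (hx : r ≤ ‖x‖) :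
    roiZ r α x = -(r * min 1 (α * r / 2)) • (‖x‖ ^ 2)⁻¹ • x := by
  rw [roiZ, max_eq_right hx, smul_smul]
  congr 1
  ring

theorem norm_roiZ_le_one (hr : 0 < r) (hα : 0 < α) (x : EuclideanSpace ℝ (Fin 2)) :
    ‖roiZ r α x‖ ≤ 1 := by
  set M := max r ‖x‖
  have hM : 0 < M := lt_max_of_lt_left hr
  have hm : min 1 (α * r / 2) ∈ Set.Icc 0 1 := ⟨by positivity, min_le_left _ _⟩
  rw [roiZ, norm_smul, norm_neg, Real.norm_of_nonneg (by have := hm.1; positivity)]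
  calc r / M ^ 2 * min 1 (α * r / 2) * ‖x‖ ≤ r / M ^ 2 * 1 * M := by
        gcongr
        exacts [hm.2, le_max_right _ _]
    _ = r / M := by field_simp
    _ ≤ 1 := (div_le_one hM).2 (le_max_left _ _)

/-- Inside the disc both sides equal `-min (2 / r) α`. -/
theorem mul_roiU_sub_roiG_of_norm_lt (hr : 0 < r) (hα : 0 < α) {x : EuclideanSpace ℝ (Fin 2)}
    (hx : ‖x‖ < r) :
    α * (roiU r α x - roiG r x) = -(min 1 (α * r / 2) / r) * 2 := by
  have hαr : 0 < α * r := by positivity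
  rw [roiU, roiG, if_pos hx]
  rcases le_total (α * r / 2) 1 with h | h
  · rw [min_eq_right h, max_eq_left]
    · field_simp
      ring
    · rw [sub_nonpos, le_div_iff₀ hαr]
      linarith
  · rw [min_eq_left h, max_eq_right]
    · field_simp
      ring
    · rw [sub_nonneg, div_le_one hαr]
      linarith

theorem mul_roiU_sub_roiG_of_lt_norm {x : EuclideanSpace ℝ (Fin 2)} (hx : r < ‖x‖) :
    α * (roiU r α x - roiG r x) = 0 := by
  simp [roiU, roiG, hx.not_gt]

end Benchmark

theorem rof_benchmark_optimality_general (r α : ℝ) (hr0 : 0 < r)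
    (hα : 0 < α) :
    (∀ x : EuclideanSpace ℝ (Fin 2), ‖roiZ r α x‖ ≤ 1) ∧
    (∀ x : EuclideanSpace ℝ (Fin 2), ‖x‖ ≠ r → x ≠ 0 →
      ∃ L : EuclideanSpace ℝ (Fin 2) →L[ℝ] EuclideanSpace ℝ (Fin 2),
        HasFDerivAt (roiZ r α) L x ∧
        LinearMap.trace ℝ (EuclideanSpace ℝ (Fin 2)) L.toLinearMap
          = α * (roiU r α x - roiG r x)) := by
  refine ⟨norm_roiZ_le_one hr0 hα, fun x hxr hx0 ↦ ?_⟩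
  change HasDivAt (roiZ r α) _ x
  rcases hxr.lt_or_gt with hx | hx
  · have hdiv := (hasDivAt_id x).const_smul (-(min 1 (α * r / 2) / r))
    rw [finrank_euclideanSpace_fin, Nat.cast_ofNat,
      ← mul_roiU_sub_roiG_of_norm_lt hr0 hα hx] at hdiv
    refine hdiv.congr_of_eventuallyEq ?_
    filter_upwards [(continuous_norm.tendsto x).eventually_lt_const hx] with y hy
    exact roiZ_of_norm_le hy.le
  · have hdiv := (hasDivAt_inv_norm_sq_smul hx0).const_smul (-(r * min 1 (α * r / 2)))
    rw [finrank_euclideanSpace_fin, Nat.cast_two, sub_self, zero_div, mul_zero,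
      ← mul_roiU_sub_roiG_of_lt_norm (α := α) hx] at hdiv
    refine hdiv.congr_of_eventuallyEq ?_
    filter_upwards [(continuous_norm.tendsto x).eventually_const_lt hx] with y hy
    exact roiZ_of_le_norm hy.le

/-- For the ROF benchmark example in dimension two, the dual solution satisfies
`‖z‖ ≤ 1` everywhere and, away from the interface `‖x‖ = r` and the origin, `z`
is differentiable with `div z = α (u − g)`. -/
theorem rof_benchmark_optimality (r α : ℝ) (hr0 : 0 < r) (hr1 : r < 1)
    (hα : 0 < α) :
    (∀ x : EuclideanSpace ℝ (Fin 2), ‖roiZ r α x‖ ≤ 1) ∧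
    (∀ x : EuclideanSpace ℝ (Fin 2), ‖x‖ ≠ r → x ≠ 0 →
      ∃ L : EuclideanSpace ℝ (Fin 2) →L[ℝ] EuclideanSpace ℝ (Fin 2),
        HasFDerivAt (roiZ r α) L x ∧
        LinearMap.trace ℝ (EuclideanSpace ℝ (Fin 2)) L.toLinearMap
          = α * (roiU r α x - roiG r x)) :=
  rof_benchmark_optimality_general r α hr0 hα
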